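/- Skeletal 2-term conformal L∞-algebras (those with d = 0) are in one-to-one correspondence with quadruples (R, M, ▷_λ, l³) where R is a Lie conformal algebra, M is a ℂ[∂]-module, ▷_λ is a left action of R on M, and l³ is a 3-cocycle on R with values in M. Concretely: if d = 0 then (V₀, l²_λ) is a Lie conformal algebra, x ▷_λ h := l²_λ(x,h) makes V₁ a left V₀-module, and l³_{λ₁,λ₂} is a 3-cocycle of V₀ with coefficients in V₁; conversely, any such quadruple with d = 0 yields a skeletal 2-term conformal L∞-algebra. -/

import Mathlib

/-!
Core framework for λ-bracket (conformal) algebra over ℂ[∂].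

`CD = ℂ[∂]`.  For a `ℂ[∂]`-module `M`, `PM1 M = M[λ]` is the polynomial module in one
variable λ; it is a module over `A1 = ℂ[∂][λ]` (where `Polynomial.X : A1` is λ and
`Polynomial.C dd : A1` is ∂ acting on coefficients).  Iterating gives `PM2 M = M[λ₁,λ₂]`
(a module over `A2 = ℂ[∂][λ₁][λ₂]`, where `vl = λ₁` is the inner variable and `vm = λ₂`
the outer one) and `PM3 M = M[λ₁,λ₂,λ₃]` (over `A3`, variables `u1, u2, u3`).

`lift1 w F p` evaluates a one-variable polynomial `p = Σ aₙ λⁿ` as `Σ wⁿ • F aₙ`: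
this is how expressions like `[x_λ [y_μ z]]`, substitutions `λ ↦ -∂-λ`, `λ ↦ λ+μ`, etc.
are expressed.  Similarly `lift2`, `lift3`.
-/

set_option maxSynthPendingDepth 5

noncomputable section
open Polynomial

abbrev CD : Type := Polynomial ℂ
abbrev A1 : Type := Polynomial CD
abbrev A2 : Type := Polynomial A1
abbrev A3 : Type := Polynomial A2

/-- The operator ∂, i.e. the variable of `ℂ[∂]`. -/
def dd : CD := Polynomial.X

abbrev PM1 (M : Type) [AddCommGroup M] [Module CD M] : Type := PolynomialModule CD M
abbrev PM2 (M : Type) [AddCommGroup M] [Module CD M] : Type := PolynomialModule A1 (PM1 M)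
abbrev PM3 (M : Type) [AddCommGroup M] [Module CD M] : Type := PolynomialModule A2 (PM2 M)

namespace CLC

variable {M S : Type} [AddCommGroup M] [Module CD M] [AddCommGroup S] [Module CD S]

/-- `c ∈ ℂ` as an element of `ℂ[∂]`. -/
def cC (c : ℂ) : CD := Polynomial.C c
/-- `c ∈ ℂ` as a scalar for `M[λ]`. -/
def cC1 (c : ℂ) : A1 := Polynomial.C (Polynomial.C c)
/-- `c ∈ ℂ` as a scalar for `M[λ₁,λ₂]`. -/
def cC2 (c : ℂ) : A2 := Polynomial.C (Polynomial.C (Polynomial.C c))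

/-- λ₁ as a scalar for `M[λ₁,λ₂]`. -/
def vl : A2 := Polynomial.C Polynomial.X
/-- λ₂ as a scalar for `M[λ₁,λ₂]`. -/
def vm : A2 := Polynomial.X
/-- ∂ as a scalar for `M[λ₁,λ₂]`. -/
def vd : A2 := Polynomial.C (Polynomial.C dd)

/-- λ₁ as a scalar for `M[λ₁,λ₂,λ₃]`. -/
def u1 : A3 := Polynomial.C (Polynomial.C Polynomial.X)
/-- λ₂ as a scalar for `M[λ₁,λ₂,λ₃]`. -/
def u2 : A3 := Polynomial.C Polynomial.X
/-- λ₃ as a scalar for `M[λ₁,λ₂,λ₃]`. -/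
def u3 : A3 := Polynomial.X
/-- ∂ as a scalar for `M[λ₁,λ₂,λ₃]`. -/
def ud : A3 := Polynomial.C (Polynomial.C (Polynomial.C dd))

/-- `m`, as a constant polynomial in `M[λ]`. -/
def base1 (a : M) : PM1 M := PolynomialModule.single CD 0 a
/-- `m`, as a constant polynomial in `M[λ₁,λ₂]`. -/
def base2 (a : M) : PM2 M := PolynomialModule.single A1 0 (base1 a)
/-- `m`, as a constant polynomial in `M[λ₁,λ₂,λ₃]`. -/
def base3 (a : M) : PM3 M := PolynomialModule.single A2 0 (base2 a)

/-- Evaluation of a one-variable polynomial `Σ aₙ λⁿ` as `Σ wⁿ • F aₙ`. -/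
def lift1 {B T : Type} [CommRing B] [AddCommGroup T] [Module B T]
    (w : B) (F : S → T) (p : PM1 S) : T :=
  (show ℕ →₀ S from p.coeff).sum fun n a => w ^ n • F a

/-- Evaluation of a two-variable polynomial, with `w1` substituted for the inner
variable and `w2` for the outer one. -/
def lift2 {B T : Type} [CommRing B] [AddCommGroup T] [Module B T]
    (w1 w2 : B) (F : S → T) (q : PM2 S) : T :=
  (show ℕ →₀ PM1 S from q.coeff).sum fun n r => w2 ^ n • lift1 w1 F r

/-- Evaluation of a three-variable polynomial. -/
def lift3 {B T : Type} [CommRing B] [AddCommGroup T] [Module B T]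
    (w1 w2 w3 : B) (F : S → T) (q : PM3 S) : T :=
  (show ℕ →₀ PM2 S from q.coeff).sum fun n r => w3 ^ n • lift2 w1 w2 F r

/-- The substitution `λ ↦ -∂-λ` on `M[λ]`. -/
def negShift : PM1 M → PM1 M :=
  lift1 (-(Polynomial.C dd) - Polynomial.X : A1) base1

/-- A `ℂ[∂]`-linear map applied coefficientwise on `M[λ]`. -/
def map1 (f : S →ₗ[CD] M) : PM1 S → PM1 M :=
  lift1 (Polynomial.X : A1) (fun a => base1 (f a))

/-- A `ℂ[∂]`-linear map applied coefficientwise on `M[λ₁,λ₂]`. -/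
def map2 (f : S →ₗ[CD] M) : PM2 S → PM2 M :=
  lift2 vl vm (fun a => base2 (f a))

/-- A `ℂ[∂]`-linear map applied coefficientwise on `M[λ₁,λ₂,λ₃]`. -/
def map3 (f : S →ₗ[CD] M) : PM3 S → PM3 M :=
  lift3 u1 u2 u3 (fun a => base3 (f a))


variable {R M : Type} [AddCommGroup R] [Module CD R] [AddCommGroup M] [Module CD M]

/-- A conformal algebra structure: a ℂ-bilinear λ-product `R × R → R[λ]`
satisfying conformal sesquilinearity. -/
structure ConfBracket (R : Type) [AddCommGroup R] [Module CD R] where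
  br : R → R → PM1 R
  add_left : ∀ x y z, br (x + y) z = br x z + br y z
  add_right : ∀ x y z, br x (y + z) = br x y + br x z
  smulC_left : ∀ (c : ℂ) (x y : R), br (cC c • x) y = cC1 c • br x y
  smulC_right : ∀ (c : ℂ) (x y : R), br x (cC c • y) = cC1 c • br x y
  sesq_left : ∀ x y, br (dd • x) y = -((Polynomial.X : A1) • br x y)
  sesq_right : ∀ x y, br x (dd • y) = (Polynomial.C dd + Polynomial.X : A1) • br x y

/-- `x ∘_{λ₁} (y ∘_{λ₂} z)` as an element of `R[λ₁,λ₂]`. -/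
def jT1 (br : R → R → PM1 R) (x y z : R) : PM2 R :=
  lift1 vm (fun a => lift1 vl base2 (br x a)) (br y z)

/-- `(x ∘_{λ₁} y) ∘_{λ₁+λ₂} z` as an element of `R[λ₁,λ₂]`. -/
def jT2 (br : R → R → PM1 R) (x y z : R) : PM2 R :=
  lift1 vl (fun a => lift1 (vl + vm) base2 (br a z)) (br x y)

/-- `y ∘_{λ₂} (x ∘_{λ₁} z)` as an element of `R[λ₁,λ₂]`. -/
def jT3 (br : R → R → PM1 R) (x y z : R) : PM2 R :=
  lift1 vl (fun a => lift1 vm base2 (br y a)) (br x z)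

/-- `(x ∘_{λ₁} z) ∘_{-∂-λ₂} y` as an element of `R[λ₁,λ₂]`. -/
def jT4 (br : R → R → PM1 R) (x y z : R) : PM2 R :=
  lift1 vl (fun a => lift1 (-vd - vm) base2 (br a y)) (br x z)

namespace ConfBracket

variable (B : ConfBracket R)

/-- Skew-symmetry `[x_λ y] = -[y_{-∂-λ} x]`. -/
def Skew : Prop := ∀ x y, B.br x y = - negShift (B.br y x)

/-- The Jacobi identity `[x_λ [y_μ z]] = [[x_λ y]_{λ+μ} z] + [y_μ [x_λ z]]`. -/
def Jacobi : Prop := ∀ x y z, jT1 B.br x y z = jT2 B.br x y z + jT3 B.br x y z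

/-- The left Leibniz identity `x∘_λ(y∘_μ z) = (x∘_λ y)∘_{λ+μ} z + y∘_μ(x∘_λ z)`. -/
def LeftLeibniz : Prop := ∀ x y z, jT1 B.br x y z = jT2 B.br x y z + jT3 B.br x y z

/-- The right Leibniz identity `(x∘_λ y)∘_{λ+μ} z = x∘_λ(y∘_μ z) + (x∘_λ z)∘_{-∂-μ} y`. -/
def RightLeibniz : Prop := ∀ x y z, jT2 B.br x y z = jT1 B.br x y z + jT4 B.br x y z

/-- A Lie conformal algebra: skew-symmetric and satisfying the Jacobi identity. -/
def IsLie : Prop := B.Skew ∧ B.Jacobi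

end ConfBracket

/-- A conformal left-action datum: a ℂ-bilinear map `R × M → M[λ]` satisfying
conformal sesquilinearity. -/
structure ConfAction (R M : Type) [AddCommGroup R] [Module CD R]
    [AddCommGroup M] [Module CD M] where
  act : R → M → PM1 M
  add_left : ∀ (x y : R) (v : M), act (x + y) v = act x v + act y v
  add_right : ∀ (x : R) (v w : M), act x (v + w) = act x v + act x w
  smulC_left : ∀ (c : ℂ) (x : R) (v : M), act (cC c • x) v = cC1 c • act x v
  smulC_right : ∀ (c : ℂ) (x : R) (v : M), act x (cC c • v) = cC1 c • act x v
  sesq_left : ∀ (x : R) (v : M), act (dd • x) v = -((Polynomial.X : A1) • act x v)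
  sesq_right : ∀ (x : R) (v : M),
    act x (dd • v) = (Polynomial.C dd + Polynomial.X : A1) • act x v

/-- The left-module identity `[x_λ y] ▷_{λ+μ} v = x ▷_λ (y ▷_μ v) - y ▷_μ (x ▷_λ v)`. -/
def IsLeftModule (B : ConfBracket R) (A : ConfAction R M) : Prop :=
  ∀ (x y : R) (v : M),
    lift1 vl (fun a => lift1 (vl + vm) base2 (A.act a v)) (B.br x y) =
      lift1 vm (fun m => lift1 vl base2 (A.act x m)) (A.act y v)
      - lift1 vl (fun m => lift1 vm base2 (A.act y m)) (A.act x v)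

/-- A conformal right-action datum: a ℂ-bilinear map `M × R → M[λ]` satisfying
conformal sesquilinearity. -/
structure ConfRAction (R M : Type) [AddCommGroup R] [Module CD R]
    [AddCommGroup M] [Module CD M] where
  act : M → R → PM1 M
  add_left : ∀ (v w : M) (x : R), act (v + w) x = act v x + act w x
  add_right : ∀ (v : M) (x y : R), act v (x + y) = act v x + act v y
  smulC_left : ∀ (c : ℂ) (v : M) (x : R), act (cC c • v) x = cC1 c • act v x
  smulC_right : ∀ (c : ℂ) (v : M) (x : R), act v (cC c • x) = cC1 c • act v x
  sesq_left : ∀ (v : M) (x : R), act (dd • v) x = -((Polynomial.X : A1) • act v x)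
  sesq_right : ∀ (v : M) (x : R),
    act v (dd • x) = (Polynomial.C dd + Polynomial.X : A1) • act v x

/-- The right-module identity
`v ◁_μ [x_λ y] = (v ◁_μ x) ◁_{λ+μ} y - (v ◁_μ y) ◁_{-∂-λ} x`
(here λ is the inner variable `vl` and μ the outer variable `vm`). -/
def IsRightModule (B : ConfBracket R) (A : ConfRAction R M) : Prop :=
  ∀ (x y : R) (v : M),
    lift1 vl (fun a => lift1 vm base2 (A.act v a)) (B.br x y) =
      lift1 vm (fun m => lift1 (vl + vm) base2 (A.act m y)) (A.act v x)
      - lift1 vm (fun m => lift1 (-vd - vl) base2 (A.act m x)) (A.act v y)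


variable {V0 V1 : Type} [AddCommGroup V0] [Module CD V0] [AddCommGroup V1] [Module CD V1]

/-- A 2-term conformal `L∞`-algebra `(V₁ --d--> V₀, l², l³)`.

`l200, l201, l210` are the components of `l²` on `V₀×V₀`, `V₀×V₁`, `V₁×V₀`
(there is no `V₁×V₁` component, cf. `0 ≤ i+j ≤ 1`; equivalently `l²_λ(h,k)=0`).
`l3` takes values in `V₁[λ₁,λ₂]`; the conditions (a)–(i) of the definition are the
fields `condA`–`condI` (condition (c) being vacuous). -/
structure TwoTerm (V0 V1 : Type) [AddCommGroup V0] [Module CD V0]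
    [AddCommGroup V1] [Module CD V1] where
  d : V1 →ₗ[CD] V0
  l200 : V0 → V0 → PM1 V0
  l201 : V0 → V1 → PM1 V1
  l210 : V1 → V0 → PM1 V1
  l3 : V0 → V0 → V0 → PM2 V1
  -- conformal sesquilinearity and ℂ-bilinearity of the brackets
  l200_add_left : ∀ x y z, l200 (x + y) z = l200 x z + l200 y z
  l200_add_right : ∀ x y z, l200 x (y + z) = l200 x y + l200 x z
  l200_smulC_left : ∀ (c : ℂ) x y, l200 (cC c • x) y = cC1 c • l200 x y
  l200_smulC_right : ∀ (c : ℂ) x y, l200 x (cC c • y) = cC1 c • l200 x y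
  l200_sesq_left : ∀ x y, l200 (dd • x) y = -((Polynomial.X : A1) • l200 x y)
  l200_sesq_right : ∀ x y,
    l200 x (dd • y) = (Polynomial.C dd + Polynomial.X : A1) • l200 x y
  l201_add_left : ∀ x y h, l201 (x + y) h = l201 x h + l201 y h
  l201_add_right : ∀ x h k, l201 x (h + k) = l201 x h + l201 x k
  l201_smulC_left : ∀ (c : ℂ) x h, l201 (cC c • x) h = cC1 c • l201 x h
  l201_smulC_right : ∀ (c : ℂ) x h, l201 x (cC c • h) = cC1 c • l201 x h
  l201_sesq_left : ∀ x h, l201 (dd • x) h = -((Polynomial.X : A1) • l201 x h)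
  l201_sesq_right : ∀ x h,
    l201 x (dd • h) = (Polynomial.C dd + Polynomial.X : A1) • l201 x h
  l210_add_left : ∀ h k x, l210 (h + k) x = l210 h x + l210 k x
  l210_add_right : ∀ h x y, l210 h (x + y) = l210 h x + l210 h y
  l210_smulC_left : ∀ (c : ℂ) h x, l210 (cC c • h) x = cC1 c • l210 h x
  l210_smulC_right : ∀ (c : ℂ) h x, l210 h (cC c • x) = cC1 c • l210 h x
  l210_sesq_left : ∀ h x, l210 (dd • h) x = -((Polynomial.X : A1) • l210 h x)
  l210_sesq_right : ∀ h x,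
    l210 h (dd • x) = (Polynomial.C dd + Polynomial.X : A1) • l210 h x
  l3_add1 : ∀ x y z t, l3 (x + y) z t = l3 x z t + l3 y z t
  l3_add2 : ∀ x y z t, l3 x (y + z) t = l3 x y t + l3 x z t
  l3_add3 : ∀ x y z t, l3 x y (z + t) = l3 x y z + l3 x y t
  l3_smulC1 : ∀ (c : ℂ) x y z, l3 (cC c • x) y z = cC2 c • l3 x y z
  l3_smulC2 : ∀ (c : ℂ) x y z, l3 x (cC c • y) z = cC2 c • l3 x y z
  l3_smulC3 : ∀ (c : ℂ) x y z, l3 x y (cC c • z) = cC2 c • l3 x y z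
  l3_sesq1 : ∀ x y z, l3 (dd • x) y z = -(vl • l3 x y z)
  l3_sesq2 : ∀ x y z, l3 x (dd • y) z = -(vm • l3 x y z)
  l3_sesq3 : ∀ x y z, l3 x y (dd • z) = (vd + vl + vm) • l3 x y z
  -- (a) skew-symmetry of l² on V₀×V₀
  condA : ∀ x y, l200 x y = - negShift (l200 y x)
  -- (b) skew-symmetry between the V₀×V₁ and V₁×V₀ components
  condB : ∀ x h, l201 x h = - negShift (l210 h x)
  -- (d) complete skew-symmetry of l³
  condD1 : ∀ x y z, l3 x y z = - lift2 vm vl base2 (l3 y x z)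
  condD2 : ∀ x y z, l3 x y z = - lift2 vl (-vd - vl - vm) base2 (l3 x z y)
  -- (e)
  condE : ∀ x h, map1 d (l201 x h) = l200 x (d h)
  -- (f)
  condF : ∀ h k, l201 (d h) k = l210 h (d k)
  -- (g)
  condG : ∀ x y z, map2 d (l3 x y z) =
    jT1 l200 x y z - jT2 l200 x y z - jT3 l200 x y z
  -- (h)
  condH : ∀ x y h, l3 x y (d h) =
      lift1 vm (fun k => lift1 vl base2 (l201 x k)) (l201 y h)
    - lift1 vl (fun a => lift1 (vl + vm) base2 (l201 a h)) (l200 x y)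
    - lift1 vl (fun k => lift1 vm base2 (l201 y k)) (l201 x h)
  -- (i)
  condI : ∀ x y z t,
      lift2 u2 u3 (fun a => lift1 u1 base3 (l201 x a)) (l3 y z t)
    - lift2 u1 u3 (fun a => lift1 u2 base3 (l201 y a)) (l3 x z t)
    + lift2 u1 u2 (fun a => lift1 u3 base3 (l201 z a)) (l3 x y t)
    + lift2 u1 u2 (fun h => lift1 (u1 + u2 + u3) base3 (l210 h t)) (l3 x y z)
    - lift1 u1 (fun a => lift2 (u1 + u2) u3 base3 (l3 a z t)) (l200 x y)
    - lift1 u1 (fun a => lift2 u2 (u1 + u3) base3 (l3 y a t)) (l200 x z)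
    - lift1 u1 (fun a => lift2 u2 u3 base3 (l3 y z a)) (l200 x t)
    + lift1 u2 (fun a => lift2 u1 (u2 + u3) base3 (l3 x a t)) (l200 y z)
    + lift1 u2 (fun a => lift2 u1 u3 base3 (l3 x z a)) (l200 y t)
    - lift1 u3 (fun a => lift2 u1 u2 base3 (l3 x y a)) (l200 z t)
    = 0

/-- The `V₀×V₀` component of `l²` of a 2-term conformal `L∞`-algebra,
as a conformal-algebra datum. -/
def TwoTerm.toBracket (T : TwoTerm V0 V1) : ConfBracket V0 where
  br := T.l200
  add_left := T.l200_add_left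
  add_right := T.l200_add_right
  smulC_left := T.l200_smulC_left
  smulC_right := T.l200_smulC_right
  sesq_left := T.l200_sesq_left
  sesq_right := T.l200_sesq_right

/-- The `V₀×V₁` component of `l²` of a 2-term conformal `L∞`-algebra,
as a conformal-action datum. -/
def TwoTerm.toAction (T : TwoTerm V0 V1) : ConfAction V0 V1 where
  act := T.l201
  add_left := T.l201_add_left
  add_right := T.l201_add_right
  smulC_left := T.l201_smulC_left
  smulC_right := T.l201_smulC_right
  sesq_left := T.l201_sesq_left
  sesq_right := T.l201_sesq_right

end CLC

open CLC

/-- A 3-cocycle of a Lie conformal algebra `(R, B)` with coefficients in its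
module `(M, A)`: a conformal, totally skew-symmetric trilinear map
`γ : R³ → M[λ₁,λ₂]` satisfying the 3-cocycle identity.  (For `h ∈ M`, `x ∈ R`
the term `l²_ν(h,x)` in the cocycle identity is `-(x ▷_{-∂-ν} h)`.) -/
structure Is3Cocycle {R M : Type} [AddCommGroup R] [Module CD R]
    [AddCommGroup M] [Module CD M]
    (B : ConfBracket R) (A : ConfAction R M) (γ : R → R → R → PM2 M) : Prop where
  add1 : ∀ x y z t, γ (x + y) z t = γ x z t + γ y z t
  add2 : ∀ x y z t, γ x (y + z) t = γ x y t + γ x z t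
  add3 : ∀ x y z t, γ x y (z + t) = γ x y z + γ x y t
  smulC1 : ∀ (c : ℂ) x y z, γ (cC c • x) y z = cC2 c • γ x y z
  smulC2 : ∀ (c : ℂ) x y z, γ x (cC c • y) z = cC2 c • γ x y z
  smulC3 : ∀ (c : ℂ) x y z, γ x y (cC c • z) = cC2 c • γ x y z
  sesq1 : ∀ x y z, γ (dd • x) y z = -(vl • γ x y z)
  sesq2 : ∀ x y z, γ x (dd • y) z = -(vm • γ x y z)
  sesq3 : ∀ x y z, γ x y (dd • z) = (vd + vl + vm) • γ x y z
  skew1 : ∀ x y z, γ x y z = - lift2 vm vl base2 (γ y x z)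
  skew2 : ∀ x y z, γ x y z = - lift2 vl (-vd - vl - vm) base2 (γ x z y)
  cocycle : ∀ x y z t,
      lift2 u2 u3 (fun a => lift1 u1 base3 (A.act x a)) (γ y z t)
    - lift2 u1 u3 (fun a => lift1 u2 base3 (A.act y a)) (γ x z t)
    + lift2 u1 u2 (fun a => lift1 u3 base3 (A.act z a)) (γ x y t)
    + lift2 u1 u2 (fun h => lift1 (u1 + u2 + u3) base3 (-(negShift (A.act t h)))) (γ x y z)
    - lift1 u1 (fun a => lift2 (u1 + u2) u3 base3 (γ a z t)) (B.br x y)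
    - lift1 u1 (fun a => lift2 u2 (u1 + u3) base3 (γ y a t)) (B.br x z)
    - lift1 u1 (fun a => lift2 u2 u3 base3 (γ y z a)) (B.br x t)
    + lift1 u2 (fun a => lift2 u1 (u2 + u3) base3 (γ x a t)) (B.br y z)
    + lift1 u2 (fun a => lift2 u1 u3 base3 (γ x z a)) (B.br y t)
    - lift1 u3 (fun a => lift2 u1 u2 base3 (γ x y a)) (B.br z t)
    = 0

/-!
With `d = 0`, conditions (e) and (f) of a 2-term conformal `L∞`-algebra hold trivially (both
sides vanish), while (g) and (h) lose their `d`-side and become the Jacobi identity of `l²` on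
`V₀` and the module identity of `l²` on `V₀ × V₁`.  Condition (b) determines the `V₁ × V₀`
component from the `V₀ × V₁` one through the substitution `λ ↦ -∂-λ`; since this substitution
is an involution, (b) can always be met, and it turns (i) into the 3-cocycle identity for `l³`.
-/

lemma map_zero_of_map_add {G H : Type} [AddGroup G] [AddGroup H] {f : G → H}
    (hf : ∀ a b, f (a + b) = f a + f b) : f 0 = 0 :=
  (AddMonoidHom.mk' f hf).map_zero

namespace CLC

section Lift

variable {S : Type} [AddCommGroup S] [Module CD S]
variable {B T : Type} [CommRing B] [AddCommGroup T] [Module B T]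

lemma lift1_zero (w : B) (F : S → T) : lift1 w F 0 = 0 :=
  Finsupp.sum_zero_index

lemma lift1_single (w : B) {F : S → T} (hF : F 0 = 0) (n : ℕ) (a : S) :
    lift1 w F (PolynomialModule.single CD n a) = w ^ n • F a := by
  unfold lift1
  rw [PolynomialModule.coeff_single]
  exact Finsupp.sum_single_index (by rw [hF, smul_zero])

lemma lift1_add (w : B) {F : S → T} (hF : ∀ a b, F (a + b) = F a + F b) (p q : PM1 S) :
    lift1 w F (p + q) = lift1 w F p + lift1 w F q := by
  unfold lift1
  rw [PolynomialModule.coeff_add]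
  exact Finsupp.sum_add_index' (fun _ => by rw [map_zero_of_map_add hF, smul_zero])
    (fun _ a b => by rw [hF, smul_add])

lemma lift1_fun_zero (w : B) (p : PM1 S) : lift1 w (fun _ => (0 : T)) p = 0 := by
  simp [lift1, Finsupp.sum]

lemma lift2_fun_zero (w₁ w₂ : B) (q : PM2 S) : lift2 w₁ w₂ (fun _ => (0 : T)) q = 0 := by
  simp [lift2, lift1_fun_zero, Finsupp.sum]

end Lift

section NegShift

variable {M : Type} [AddCommGroup M] [Module CD M]

lemma base1_add (a b : M) : base1 (a + b) = base1 a + base1 b := by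
  simp [base1]

lemma base1_zero : base1 (0 : M) = 0 :=
  map_zero_of_map_add base1_add

lemma base2_zero : base2 (0 : M) = 0 := by
  simp [base2, base1]

lemma X_pow_smul_base1 (n : ℕ) (a : M) :
    (X : A1) ^ n • base1 a = PolynomialModule.single CD n a := by
  rw [X_pow_eq_monomial, base1, PolynomialModule.monomial_smul_single, add_zero, one_smul]

lemma lift1_base1_smul (w q : A1) (p : PM1 M) :
    lift1 w base1 (q • p) = aeval w q • lift1 w base1 p := by
  induction q using Polynomial.induction_on' with
  | add f g hf hg => rw [add_smul, lift1_add w base1_add, hf, hg, map_add, add_smul]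
  | monomial i r =>
    induction p using PolynomialModule.induction_linear with
    | zero => rw [smul_zero, lift1_zero, smul_zero]
    | add f g hf hg =>
      rw [smul_add, lift1_add w base1_add, hf, hg, lift1_add w base1_add, smul_add]
    | single n a =>
      have hbase : base1 (r • a) = (C r : A1) • base1 a := by
        rw [base1, base1, PolynomialModule.single_smul, ← algebraMap_eq, algebraMap_smul]
      rw [PolynomialModule.monomial_smul_single, lift1_single w base1_zero,
        lift1_single w base1_zero, hbase, aeval_monomial, smul_smul, smul_smul, algebraMap_eq,
        pow_add]
      ring_nf

lemma negShift_zero : negShift (0 : PM1 M) = 0 :=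
  lift1_zero _ _

lemma negShift_add (p q : PM1 M) : negShift (p + q) = negShift p + negShift q :=
  lift1_add _ base1_add p q

lemma negShift_neg (p : PM1 M) : negShift (-p) = -negShift p :=
  (AddMonoidHom.mk' negShift negShift_add).map_neg p

lemma negShift_smul (q : A1) (p : PM1 M) :
    negShift (q • p) = aeval (-C dd - X : A1) q • negShift p :=
  lift1_base1_smul _ q p

lemma negShift_C_smul (c : CD) (p : PM1 M) : negShift ((C c : A1) • p) = C c • negShift p := by
  rw [negShift_smul, aeval_C, algebraMap_eq]

lemma negShift_single (n : ℕ) (a : M) :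
    negShift (PolynomialModule.single CD n a) = (-C dd - X : A1) ^ n • base1 a :=
  lift1_single _ base1_zero n a

lemma negShift_involutive : Function.Involutive (negShift (M := M)) := by
  intro p
  induction p using PolynomialModule.induction_linear with
  | zero => rw [negShift_zero, negShift_zero]
  | add f g hf hg => rw [negShift_add, negShift_add, hf, hg]
  | single n a =>
    have hbase : negShift (base1 a) = base1 a := by
      have h := negShift_single 0 a
      rwa [pow_zero, one_smul] at h
    rw [negShift_single, negShift_smul, hbase, map_pow, map_sub, map_neg, aeval_C, aeval_X,
      algebraMap_eq, show -C dd - (-C dd - X) = (X : A1) by ring, X_pow_smul_base1]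

end NegShift

section Structures

variable {R M : Type} [AddCommGroup R] [Module CD R] [AddCommGroup M] [Module CD M]

lemma ConfBracket.br_zero_right (B : ConfBracket R) (x : R) : B.br x 0 = 0 :=
  map_zero_of_map_add (B.add_right x)

lemma ConfAction.act_zero_left (A : ConfAction R M) (v : M) : A.act 0 v = 0 :=
  map_zero_of_map_add (f := (A.act · v)) (A.add_left · · v)

def ConfAction.toRAction (A : ConfAction R M) : ConfRAction R M where
  act v x := -negShift (A.act x v)
  add_left v w x := by rw [A.add_right, negShift_add, neg_add]
  add_right v x y := by rw [A.add_left, negShift_add, neg_add]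
  smulC_left c v x := by rw [A.smulC_right, cC1, negShift_C_smul, smul_neg]
  smulC_right c v x := by rw [A.smulC_left, cC1, negShift_C_smul, smul_neg]
  sesq_left v x := by
    rw [A.sesq_right, negShift_smul, map_add, aeval_C, aeval_X, algebraMap_eq,
      show C dd + (-C dd - X) = -(X : A1) by ring, neg_smul, smul_neg]
  sesq_right v x := by
    rw [A.sesq_left, negShift_neg, negShift_smul, aeval_X, neg_neg, smul_neg, ← neg_smul]
    congr 1
    ring

lemma ConfAction.toRAction_act (A : ConfAction R M) (v : M) (x : R) :
    A.toRAction.act v x = -negShift (A.act x v) :=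
  rfl

end Structures

end CLC

lemma Is3Cocycle.map_zero_right {R M : Type} [AddCommGroup R] [Module CD R]
    [AddCommGroup M] [Module CD M] {B : ConfBracket R} {A : ConfAction R M}
    {γ : R → R → R → PM2 M} (hγ : Is3Cocycle B A γ) (x y : R) : γ x y 0 = 0 :=
  map_zero_of_map_add (hγ.add3 x y)

namespace CLC.TwoTerm

variable {R M : Type} [AddCommGroup R] [Module CD R] [AddCommGroup M] [Module CD M]
variable (T : TwoTerm R M)

lemma l3_zero_right (x y : R) : T.l3 x y 0 = 0 :=
  map_zero_of_map_add (T.l3_add3 x y)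

lemma l210_eq (h : M) (x : R) : T.l210 h x = -negShift (T.l201 x h) := by
  rw [T.condB, negShift_neg, neg_neg, negShift_involutive]

lemma jacobi_of_d_eq_zero (hd : T.d = 0) : T.toBracket.Jacobi := by
  intro x y z
  have h := T.condG x y z
  simp only [hd, map2, LinearMap.zero_apply, base2_zero, lift2_fun_zero] at h
  rw [sub_sub, eq_comm, sub_eq_zero] at h
  exact h

lemma isLeftModule_of_d_eq_zero (hd : T.d = 0) : IsLeftModule T.toBracket T.toAction := by
  intro x y v
  have h := T.condH x y v
  rw [hd, LinearMap.zero_apply, l3_zero_right, eq_comm, sub_sub, sub_eq_zero] at h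
  exact eq_sub_of_add_eq h.symm

lemma is3Cocycle : Is3Cocycle T.toBracket T.toAction T.l3 where
  add1 := T.l3_add1
  add2 := T.l3_add2
  add3 := T.l3_add3
  smulC1 := T.l3_smulC1
  smulC2 := T.l3_smulC2
  smulC3 := T.l3_smulC3
  sesq1 := T.l3_sesq1
  sesq2 := T.l3_sesq2
  sesq3 := T.l3_sesq3
  skew1 := T.condD1
  skew2 := T.condD2
  cocycle x y z t := by
    simpa only [TwoTerm.toAction, TwoTerm.toBracket, ← T.l210_eq] using T.condI x y z t

def ofSkeletal (B : ConfBracket R) (A : ConfAction R M) (γ : R → R → R → PM2 M)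
    (hskew : B.Skew) (hjac : B.Jacobi) (hmod : IsLeftModule B A) (hγ : Is3Cocycle B A γ) :
    TwoTerm R M where
  d := 0
  l200 := B.br
  l201 := A.act
  l210 := A.toRAction.act
  l3 := γ
  l200_add_left := B.add_left
  l200_add_right := B.add_right
  l200_smulC_left := B.smulC_left
  l200_smulC_right := B.smulC_right
  l200_sesq_left := B.sesq_left
  l200_sesq_right := B.sesq_right
  l201_add_left := A.add_left
  l201_add_right := A.add_right
  l201_smulC_left := A.smulC_left
  l201_smulC_right := A.smulC_right
  l201_sesq_left := A.sesq_left
  l201_sesq_right := A.sesq_right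
  l210_add_left := A.toRAction.add_left
  l210_add_right := A.toRAction.add_right
  l210_smulC_left := A.toRAction.smulC_left
  l210_smulC_right := A.toRAction.smulC_right
  l210_sesq_left := A.toRAction.sesq_left
  l210_sesq_right := A.toRAction.sesq_right
  l3_add1 := hγ.add1
  l3_add2 := hγ.add2
  l3_add3 := hγ.add3
  l3_smulC1 := hγ.smulC1
  l3_smulC2 := hγ.smulC2
  l3_smulC3 := hγ.smulC3
  l3_sesq1 := hγ.sesq1
  l3_sesq2 := hγ.sesq2
  l3_sesq3 := hγ.sesq3
  condA := hskew
  condB x h := by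
    rw [ConfAction.toRAction_act, negShift_neg, neg_neg, negShift_involutive]
  condD1 := hγ.skew1
  condD2 := hγ.skew2
  condE x h := by
    rw [LinearMap.zero_apply, B.br_zero_right, map1]
    simp only [LinearMap.zero_apply, base1_zero, lift1_fun_zero]
  condF h k := by
    rw [LinearMap.zero_apply, LinearMap.zero_apply, A.act_zero_left, ConfAction.toRAction_act,
      A.act_zero_left, negShift_zero, neg_zero]
  condG x y z := by
    simp only [map2, LinearMap.zero_apply, base2_zero, lift2_fun_zero]
    rw [hjac x y z]
    abel
  condH x y h := by
    rw [LinearMap.zero_apply, hγ.map_zero_right, hmod x y h]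
    abel
  condI := hγ.cocycle

end CLC.TwoTerm

/-- **Statement 6.** Skeletal 2-term conformal `L∞`-algebras (those with `d = 0`)
are in one-to-one correspondence with quadruples `(R, M, ▷_λ, l³)` where `R` is a
Lie conformal algebra, `M` is a `ℂ[∂]`-module, `▷_λ` is a left action of `R` on `M`,
and `l³` is a 3-cocycle on `R` with values in `M`.  Concretely: if `d = 0` then
`(V₀, l²)` is a Lie conformal algebra, `x ▷_λ h := l²_λ(x,h)` makes `V₁` a left
`V₀`-module, and `l³` is a 3-cocycle of `V₀` with coefficients in `V₁`; conversely,
any such quadruple (with `d = 0`) yields a skeletal 2-term conformal `L∞`-algebra. -/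
theorem skeletal_twoTerm_correspondence
    {R M : Type} [AddCommGroup R] [Module CD R] [AddCommGroup M] [Module CD M] :
    (∀ T : TwoTerm R M, T.d = 0 →
        T.toBracket.Skew ∧ T.toBracket.Jacobi ∧
        IsLeftModule T.toBracket T.toAction ∧
        Is3Cocycle T.toBracket T.toAction T.l3) ∧
    (∀ (B : ConfBracket R) (A : ConfAction R M) (γ : R → R → R → PM2 M),
        B.Skew → B.Jacobi → IsLeftModule B A → Is3Cocycle B A γ →
        ∃ T : TwoTerm R M,
          T.d = 0 ∧ T.l200 = B.br ∧ T.l201 = A.act ∧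
          T.l210 = (fun h x => - negShift (A.act x h)) ∧ T.l3 = γ) :=
  ⟨fun T hd =>
      ⟨T.condA, T.jacobi_of_d_eq_zero hd, T.isLeftModule_of_d_eq_zero hd, T.is3Cocycle⟩,
    fun B A γ hskew hjac hmod hγ =>
      ⟨TwoTerm.ofSkeletal B A γ hskew hjac hmod hγ, rfl, rfl, rfl, rfl, rfl⟩⟩
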